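/- Non-meromorphic zeta function from a logarithmic weight: the Dirichlet series ζ(s) := ∑_{n=2}^∞ n^{−2s}/log(n), which converges and is holomorphic for Re(s) > 1/2, satisfies ζ'(s) = 2 − 2·ζ_R(2s) on Re(s) > 1/2 (where ζ_R is the Riemann zeta function), and hence ζ(s) = −log(2s − 1) + f(s) for an entire function f; in particular ζ does not admit a meromorphic extension to any neighbourhood of s = 1/2. -/

import Mathlib

/-!
With `a n = 1 / log n`, `ζ_a(s)` is the L-series of `a` at `2s`, and `log n · a n = 1` for
`n ≥ 2`, so termwise differentiation gives `ζ_a'(s) = -2 (ζ_R(2s) - 1)`. Since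
`ζ_R(w) - 1 / (w - 1)` is entire, `ζ_a(s) + log (2s - 1)` has an entire derivative on the
half-plane `Re s > 1/2`, hence is the restriction of an entire function (Morera). Along
`s ↓ 1/2` the function `ζ_a` then grows like `|log (2s - 1)|`: unboundedly, yet more slowly than
`|s - 1/2|⁻¹`, which no meromorphic function can do.
-/

open Filter

/-- The Dirichlet series `ζ_a(s) = ∑_{n=2}^∞ n^{-2s} / log n`. -/
noncomputable def zetaLogWeight (s : ℂ) : ℂ :=
  ∑' n : ℕ, if 2 ≤ n then (n : ℂ) ^ (-(2 * s)) / (Real.log n : ℂ) else 0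

open Complex LSeries Topology
open scoped LSeries.notation

-- `Real.log 1 = 0` makes the weight vanish at `n = 1`, as the series requires.
noncomputable def logWeight (n : ℕ) : ℂ := (Real.log n : ℂ)⁻¹

lemma LSeries.term_logWeight (w : ℂ) (n : ℕ) :
    term logWeight w n = if 2 ≤ n then (n : ℂ) ^ (-w) / (Real.log n : ℂ) else 0 := by
  rcases lt_or_ge n 2 with hn | hn
  · interval_cases n <;> simp [logWeight]
  · rw [term_of_ne_zero (by omega), if_pos hn, logWeight, cpow_neg]
    ring

lemma norm_logWeight_le (n : ℕ) : ‖logWeight n‖ ≤ (Real.log 2)⁻¹ := by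
  rcases lt_or_ge n 2 with hn | hn
  · interval_cases n <;> simp [logWeight, Real.log_nonneg one_le_two]
  · rw [logWeight, norm_inv, norm_real, Real.norm_of_nonneg (Real.log_natCast_nonneg n)]
    exact inv_anti₀ (Real.log_pos one_lt_two) (Real.log_le_log two_pos (by exact_mod_cast hn))

lemma abscissaOfAbsConv_logWeight_lt {w : ℂ} (hw : 1 < w.re) :
    abscissaOfAbsConv logWeight < w.re :=
  (abscissaOfAbsConv_le_of_le_const ⟨_, fun n _ => norm_logWeight_le n⟩).trans_lt
    (by exact_mod_cast hw)

lemma zetaLogWeight_eq_LSeries (s : ℂ) : zetaLogWeight s = LSeries logWeight (2 * s) := by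
  simp only [zetaLogWeight, LSeries, term_logWeight]

lemma LSeries_logMul_logWeight {w : ℂ} (hw : 1 < w.re) :
    LSeries (logMul logWeight) w = riemannZeta w - 1 := by
  have hcoeff {n : ℕ} (hn : n ≠ 0) : logMul logWeight n = (1 - δ) n := by
    rcases eq_or_ne n 1 with rfl | hn1
    · simp [logMul, delta]
    have hlog : Real.log n ≠ 0 := (Real.log_pos (by exact_mod_cast (by omega : 1 < n))).ne'
    simp [logMul, logWeight, delta, hn1, ← natCast_log, hlog]
  have hδ : LSeriesSummable δ w := by
    simpa only [LSeriesSummable, funext (term_delta w)] using (hasSum_ite_eq 1 (1 : ℂ)).summable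
  rw [LSeries_congr hcoeff, LSeries_sub (LSeriesSummable_one_iff.mpr hw) hδ,
    LSeries_one_eq_riemannZeta hw, LSeries_delta, Pi.one_apply]

lemma one_lt_re_two_mul {s : ℂ} (hs : 1 / 2 < s.re) : 1 < (2 * s).re := by
  simp only [mul_re, re_ofNat, im_ofNat, zero_mul, sub_zero]; linarith

theorem summable_zetaLogWeight {s : ℂ} (hs : 1 / 2 < s.re) :
    Summable (fun n : ℕ => if 2 ≤ n then (n : ℂ) ^ (-(2 * s)) / (Real.log n : ℂ) else 0) :=
  (LSeriesSummable_of_abscissaOfAbsConv_lt_re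
    (abscissaOfAbsConv_logWeight_lt (one_lt_re_two_mul hs))).congr (term_logWeight _)

theorem hasDerivAt_zetaLogWeight {s : ℂ} (hs : 1 / 2 < s.re) :
    HasDerivAt zetaLogWeight (2 - 2 * riemannZeta (2 * s)) s := by
  have hw := one_lt_re_two_mul hs
  have hL := (LSeries_hasDerivAt (abscissaOfAbsConv_logWeight_lt hw)).comp s
    ((hasDerivAt_id s).const_mul 2)
  rw [funext zetaLogWeight_eq_LSeries]
  refine hL.congr_deriv ?_
  rw [LSeries_logMul_logWeight hw]
  ring

noncomputable def riemannZetaSubPole : ℂ → ℂ :=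
  Function.update (fun w => riemannZeta w - 1 / (w - 1)) 1 Real.eulerMascheroniConstant

lemma riemannZetaSubPole_of_ne_one {w : ℂ} (hw : w ≠ 1) :
    riemannZetaSubPole w = riemannZeta w - 1 / (w - 1) :=
  Function.update_of_ne hw ..

@[fun_prop]
lemma differentiable_riemannZetaSubPole : Differentiable ℂ riemannZetaSubPole := by
  rw [← differentiableOn_univ, ← differentiableOn_compl_singleton_and_continuousAt_iff
    (c := 1) univ_mem]
  refine ⟨fun w hw => ?_, continuousAt_update_same.mpr tendsto_riemannZeta_sub_one_div⟩
  have hw1 : w ≠ 1 := hw.2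
  refine (DifferentiableAt.congr_of_eventuallyEq (f := fun w => riemannZeta w - 1 / (w - 1))
    ?_ ?_).differentiableWithinAt
  · exact (differentiableAt_riemannZeta hw1).sub
      ((differentiableAt_const 1).div (differentiableAt_id.sub_const 1) (sub_ne_zero.mpr hw1))
  · filter_upwards [isOpen_ne.mem_nhds hw1] with z hz using riemannZetaSubPole_of_ne_one hz

theorem IsOpen.exists_differentiable_eqOn_of_hasDerivAt {E : Type*} [NormedAddCommGroup E]
    [NormedSpace ℂ E] [CompleteSpace E] {U : Set ℂ} (hU : IsOpen U) (hU' : IsPreconnected U)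
    {F F' : ℂ → E} (hF' : Differentiable ℂ F') (hF : ∀ s ∈ U, HasDerivAt F (F' s) s) :
    ∃ f : ℂ → E, Differentiable ℂ f ∧ U.EqOn F f := by
  obtain ⟨Φ, hΦ⟩ := hF'.isExactOn_univ
  obtain ⟨a, ha⟩ := hU.exists_eq_add_of_deriv_eq hU'
    (fun s hs => (hF s hs).differentiableAt.differentiableWithinAt)
    (fun s _ => (hΦ s trivial).differentiableAt.differentiableWithinAt)
    (fun s hs => by rw [(hF s hs).deriv, (hΦ s trivial).deriv])
  exact ⟨(Φ · + a), fun s => (hΦ s trivial).differentiableAt.add_const a, ha⟩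

lemma hasDerivAt_zetaLogWeight_add_log {s : ℂ} (hs : 1 / 2 < s.re) :
    HasDerivAt (fun s => zetaLogWeight s + log (2 * s - 1))
      (2 - 2 * riemannZetaSubPole (2 * s)) s := by
  have hpos : 0 < (2 * s - 1).re := by
    rw [sub_re, one_re]; linarith [one_lt_re_two_mul hs]
  have hlin : HasDerivAt (fun s : ℂ => 2 * s - 1) 2 s := by
    simpa using ((hasDerivAt_id s).const_mul 2).sub_const 1
  have hne : 2 * s - 1 ≠ 0 := fun h => by simp [h] at hpos
  refine ((hasDerivAt_zetaLogWeight hs).add (hlin.clog (Or.inl hpos))).congr_deriv ?_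
  rw [riemannZetaSubPole_of_ne_one (sub_ne_zero.mp hne)]
  field_simp
  ring

theorem exists_differentiable_zetaLogWeight_eq_neg_log_add :
    ∃ f : ℂ → ℂ, Differentiable ℂ f ∧
      ∀ s : ℂ, 1 / 2 < s.re → zetaLogWeight s = -log (2 * s - 1) + f s := by
  obtain ⟨f, hf, hEq⟩ :=
    (isOpen_lt continuous_const continuous_re).exists_differentiable_eqOn_of_hasDerivAt
      (convex_halfSpace_re_gt (1 / 2)).isPreconnected
      (by fun_prop : Differentiable ℂ fun s => 2 - 2 * riemannZetaSubPole (2 * s))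
      fun s hs => hasDerivAt_zetaLogWeight_add_log hs
  exact ⟨f, hf, fun s hs => by rw [← hEq hs]; ring⟩

section Meromorphic

variable {𝕜 : Type*} [NontriviallyNormedField 𝕜] {c : 𝕜} {α : Type*} {l : Filter α} [l.NeBot]
  {φ : α → 𝕜}

theorem MeromorphicAt.tendsto_nhdsNE_zero_of_tendsto {E : Type*} [NormedAddCommGroup E]
    [NormedSpace 𝕜 E] {f : 𝕜 → E} (hf : MeromorphicAt f c) (hφ : Tendsto φ l (𝓝[≠] c))
    (hf0 : Tendsto (fun a => f (φ a)) l (𝓝 0)) : Tendsto f (𝓝[≠] c) (𝓝 0) := by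
  rw [tendsto_zero_iff_meromorphicOrderAt_pos hf]
  by_contra! hle
  rcases hle.lt_or_eq with hneg | hzero
  · have hinf := tendsto_norm_atTop_iff_cobounded.mpr
      ((tendsto_cobounded_of_meromorphicOrderAt_neg hneg).comp hφ)
    exact not_tendsto_atTop_of_tendsto_nhds hf0.norm hinf
  · obtain ⟨a, ha, hfa⟩ := tendsto_ne_zero_of_meromorphicOrderAt_eq_zero hf hzero
    exact ha (tendsto_nhds_unique (hfa.comp hφ) hf0)

theorem MeromorphicAt.not_tendsto_norm_atTop_of_tendsto_sub_mul {f : 𝕜 → 𝕜}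
    (hf : MeromorphicAt f c) (hφ : Tendsto φ l (𝓝[≠] c))
    (hf0 : Tendsto (fun a => (φ a - c) * f (φ a)) l (𝓝 0)) :
    ¬ Tendsto (fun a => ‖f (φ a)‖) l atTop := by
  have hsub : MeromorphicAt (fun z => z - c) c := by fun_prop
  have hpos := (tendsto_zero_iff_meromorphicOrderAt_pos (hsub.mul hf)).mp
    ((hsub.mul hf).tendsto_nhdsNE_zero_of_tendsto hφ hf0)
  have hnonneg : 0 ≤ meromorphicOrderAt f c := by
    rw [meromorphicOrderAt_mul hsub hf, meromorphicOrderAt_id_sub_const] at hpos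
    generalize meromorphicOrderAt f c = n at hpos ⊢
    cases n with
    | top => simp
    | coe n => norm_cast at hpos ⊢; omega
  obtain ⟨a, ha⟩ := tendsto_nhds_of_meromorphicOrderAt_nonneg hf hnonneg
  exact not_tendsto_atTop_of_tendsto_nhds (ha.comp hφ).norm

end Meromorphic

lemma tendsto_half_add_half_nhdsNE :
    Tendsto (fun t : ℝ => (1 + (t : ℂ)) / 2) (𝓝[>] 0) (𝓝[≠] (1 / 2)) := by
  refine tendsto_nhdsWithin_iff.mpr ⟨?_, ?_⟩
  · have : Continuous fun t : ℝ => (1 + (t : ℂ)) / 2 := by fun_prop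
    simpa using (this.tendsto 0).mono_left nhdsWithin_le_nhds
  · filter_upwards [self_mem_nhdsWithin] with t (ht : 0 < t)
    intro (h : (1 + (t : ℂ)) / 2 = 1 / 2)
    exact ht.ne' (ofReal_eq_zero.mp (by linear_combination 2 * h))

theorem not_meromorphicAt_of_eq_neg_log_add {f g : ℂ → ℂ} (hf : AnalyticAt ℂ f (1 / 2))
    (hg : ∀ᶠ s in 𝓝 (1 / 2), 1 / 2 < s.re → g s = -log (2 * s - 1) + f s) :
    ¬ MeromorphicAt g (1 / 2) := by
  intro hmero
  set φ : ℝ → ℂ := fun t => (1 + (t : ℂ)) / 2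
  have hφ : Tendsto φ (𝓝[>] 0) (𝓝[≠] (1 / 2)) := tendsto_half_add_half_nhdsNE
  have hlog : ∀ᶠ t in 𝓝[>] (0 : ℝ), g (φ t) - f (φ t) = -(Real.log t : ℂ) := by
    filter_upwards [(hφ.mono_right nhdsWithin_le_nhds).eventually hg, self_mem_nhdsWithin]
      with t ht (htpos : 0 < t)
    have h2φ : 2 * φ t - 1 = t := by simp only [φ]; ring
    rw [ht (by simp only [φ, div_ofNat_re, add_re, one_re, ofReal_re]; linarith), h2φ, ← ofReal_log htpos.le]
    ring
  refine (hmero.sub hf.meromorphicAt).not_tendsto_norm_atTop_of_tendsto_sub_mul hφ ?_ ?_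
  · have hml : Tendsto (fun t : ℝ => -((t * Real.log t : ℝ) : ℂ) / 2) (𝓝[>] 0) (𝓝 0) := by
      have := ((continuous_ofReal.comp Real.continuous_mul_log).tendsto 0).neg.div_const 2
      simpa using this.mono_left nhdsWithin_le_nhds
    refine hml.congr' ?_
    filter_upwards [hlog] with t ht
    simp only [Pi.sub_apply, ht, φ]
    push_cast
    ring
  · refine (tendsto_abs_atBot_atTop.comp Real.tendsto_log_nhdsGT_zero).congr' ?_
    filter_upwards [hlog] with t ht
    simp [ht]

theorem not_exists_meromorphicOn_eq_zetaLogWeight :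
    ¬ ∃ (U : Set ℂ) (g : ℂ → ℂ), IsOpen U ∧ (1 / 2 : ℂ) ∈ U ∧ MeromorphicOn g U ∧
      ∀ s ∈ U, 1 / 2 < s.re → g s = zetaLogWeight s := by
  rintro ⟨U, g, hU, hU2, hg, hgζ⟩
  obtain ⟨f, hf, hζ⟩ := exists_differentiable_zetaLogWeight_eq_neg_log_add
  refine not_meromorphicAt_of_eq_neg_log_add (hf.analyticAt _) ?_ (hg _ hU2)
  filter_upwards [hU.mem_nhds hU2] with s hs hre
  rw [hgζ s hs hre, hζ s hre]

/-- Non-meromorphic zeta function from a logarithmic weight: the Dirichlet series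
`ζ_a(s) = ∑_{n≥2} n^{-2s} / log n` converges for `Re s > 1/2`, is differentiable there with
derivative `2 - 2 ζ_R(2s)` (where `ζ_R` is the Riemann zeta function); hence
`ζ_a(s) = -log(2s - 1) + f(s)` for an entire function `f`, and `ζ_a` admits no meromorphic
extension to any neighbourhood of `s = 1/2`. -/
theorem stmt_19 :
    (∀ s : ℂ, 1 / 2 < s.re →
      Summable (fun n : ℕ => if 2 ≤ n then (n : ℂ) ^ (-(2 * s)) / (Real.log n : ℂ) else 0)) ∧
    (∀ s : ℂ, 1 / 2 < s.re →
      HasDerivAt zetaLogWeight (2 - 2 * riemannZeta (2 * s)) s) ∧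
    (∃ f : ℂ → ℂ, Differentiable ℂ f ∧
      ∀ s : ℂ, 1 / 2 < s.re → zetaLogWeight s = -Complex.log (2 * s - 1) + f s) ∧
    (¬ ∃ (U : Set ℂ) (g : ℂ → ℂ), IsOpen U ∧ (1 / 2 : ℂ) ∈ U ∧ MeromorphicOn g U ∧
      ∀ s ∈ U, 1 / 2 < s.re → g s = zetaLogWeight s) :=
  ⟨fun _ => summable_zetaLogWeight, fun _ => hasDerivAt_zetaLogWeight,
    exists_differentiable_zetaLogWeight_eq_neg_log_add, not_exists_meromorphicOn_eq_zetaLogWeight⟩
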